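/- arXiv:2307.03036 — 5 statements merged into one kernel-verified Lean document; each statement's English description precedes it below -/
import Mathlib

section
/- Assume there exists κ > 0 such that reg(l) + κ ≤ α(l) for every l ∈ 𝔏, and such that every n ∈ ℕ^d satisfies either |n| < ν or |n| > ν + 2κ. Then every β ∈ N_min satisfies |β| > ν − η + κ·ℓ(β) + (1/2)·Σ_{n ∈ ℕ^d} (|n| − ν)·β(n). -/
open scoped Classical

noncomputable section

/-- The set of `d`-tuples of natural numbers, `ℕ^d`. -/
abbrev Nd (d : ℕ) : Type := Fin d → ℕ

/-- Multi-indices over `ℕ^d`: finitely supported functions `ℕ^d → ℕ`. -/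
abbrev MNd (d : ℕ) : Type := Nd d →₀ ℕ

/-- The coordinate set `coord = (𝔏 × M(ℕ^d)) ⊔ ℕ^d`, where `𝔏 = 𝔏⁻ ∪ {0}` is
modelled as `Option Lm` (with `none` playing the role of the element `0`). -/
abbrev Coord (Lm : Type) (d : ℕ) : Type := (Option Lm × MNd d) ⊕ Nd d

/-- Multi-indices over `coord`. -/
abbrev MCoord (Lm : Type) (d : ℕ) : Type := Coord Lm d →₀ ℕ

variable {Lm : Type} {d : ℕ}

/-- Length `ℓ(m)` of a multi-index. -/
def mlen {I : Type} (m : I →₀ ℕ) : ℕ := m.sum fun _ v => v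

/-- The `i`-th unit vector of `ℕ^d`. -/
def unitNd (i : Fin d) : Nd d := Pi.single i 1

/-- The coefficient `(z^{γ'} D^{(n')})_β^γ`. -/
def coefZD (γ' : MCoord Lm d) (n' : Nd d) (β γ : MCoord Lm d) : ℝ :=
  (γ.sum fun x v =>
    match x with
    | Sum.inl (l, k) =>
        (v : ℝ) * ((k n' : ℝ) + 1) *
          (if β + Finsupp.single (Sum.inl (l, k)) 1 =
              γ + Finsupp.single (Sum.inl (l, k + Finsupp.single n' 1)) 1 + γ'
           then 1 else 0)
    | Sum.inr _ => 0) +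
  ((γ (Sum.inr n') : ℝ) *
    (if β + Finsupp.single (Sum.inr n') 1 = γ + γ' then 1 else 0))

/-- The coefficient `(D^{(n')})_β^γ`. -/
def coefD (n' : Nd d) (β γ : MCoord Lm d) : ℝ := coefZD 0 n' β γ

/-- The coefficient `(∂_i)_β^γ`. -/
def coefPartial (i : Fin d) (β γ : MCoord Lm d) : ℝ :=
  ∑ᶠ n : Nd d,
    ((n i : ℝ) + 1) * coefZD (Finsupp.single (Sum.inr (n + unitNd i)) 1) n β γ

/-- `[β]`. -/
def brkt (β : MCoord Lm d) : ℤ :=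
  β.sum fun x v =>
    match x with
    | Sum.inl (_, k) => (1 - (mlen k : ℤ)) * (v : ℤ)
    | Sum.inr _ => (v : ℤ)

/-- Noise homogeneity `⟦β⟧`. -/
def nh (β : MCoord Lm d) : ℕ :=
  β.sum fun x v =>
    match x with
    | Sum.inl (some _, _) => v
    | Sum.inl (none, _) => 0
    | Sum.inr _ => 0

/-- Scaled degree `|n|` of `n ∈ ℕ^d`. -/
def snorm (s : Fin d → ℝ) (n : Nd d) : ℝ := ∑ i, s i * (n i : ℝ)

/-- A subcritical pair `(l,k)`. -/
def Subcritical {L : Type} (s : Fin d → ℝ) (η : ℝ) (reg : L → ℝ) (ν : ℝ)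
    (l : L) (k : MNd d) : Prop :=
  ν < η + reg l ∧
  ∀ k' : MNd d, 0 < k' → k' ≤ k →
    ν < η + (k'.sum fun n v => (ν - snorm s n) * (v : ℝ)) ∧
    ν < η + reg l + (k'.sum fun n v => (ν - snorm s n) * (v : ℝ))

/-- A subcritical multi-index. -/
def SubcriticalM (s : Fin d → ℝ) (η : ℝ) (reg : Option Lm → ℝ) (ν : ℝ)
    (β : MCoord Lm d) : Prop :=
  ∀ (l : Option Lm) (k : MNd d), β (Sum.inl (l, k)) ≠ 0 → Subcritical s η reg ν l k

/-- Homogeneity `|β|`. -/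
def homg (s : Fin d → ℝ) (η : ℝ) (α : Option Lm → ℝ) (β : MCoord Lm d) : ℝ :=
  β.sum fun x v =>
    match x with
    | Sum.inl (l, k) =>
        (α l + k.sum fun n v' => (η - snorm s n) * (v' : ℝ)) * (v : ℝ)
    | Sum.inr n => (snorm s n - η) * (v : ℝ)

/-- The set `N_min`. -/
def Nmin (s : Fin d → ℝ) (η : ℝ) (reg : Option Lm → ℝ) (ν : ℝ) :
    Set (MCoord Lm d) :=
  {β | brkt β = 1 ∧ SubcriticalM s η reg ν β ∧
       ∀ n : Nd d, snorm s n < ν → β (Sum.inr n) = 0}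

/-- The set `N`. -/
def NSet (s : Fin d → ℝ) (η : ℝ) (reg : Option Lm → ℝ) (ν : ℝ) :
    Set (MCoord Lm d) :=
  {β | β ∈ Nmin s η reg ν ∧ 0 < nh β}

/-- The purely polynomial set `P = {e_n}`. -/
def PolySet : Set (MCoord Lm d) :=
  {β | ∃ n : Nd d, β = Finsupp.single (Sum.inr n) 1}

/-- `populated = P ∪ N`. -/
def Populated (s : Fin d → ℝ) (η : ℝ) (reg : Option Lm → ℝ) (ν : ℝ) :
    Set (MCoord Lm d) :=
  PolySet ∪ NSet s η reg ν

/-- The subcritical coefficient `(z^{γ'} D^{(n')})^{sc}_β^γ`. -/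
def coefZDsc (s : Fin d → ℝ) (η : ℝ) (reg : Option Lm → ℝ) (ν : ℝ)
    (γ' : MCoord Lm d) (n' : Nd d) (β γ : MCoord Lm d) : ℝ :=
  (γ.sum fun x v =>
    match x with
    | Sum.inl (l, k) =>
        if Subcritical s η reg ν l (k + Finsupp.single n' 1) then
          (v : ℝ) * ((k n' : ℝ) + 1) *
            (if β + Finsupp.single (Sum.inl (l, k)) 1 =
                γ + Finsupp.single (Sum.inl (l, k + Finsupp.single n' 1)) 1 + γ'
             then 1 else 0)
        else 0
    | Sum.inr _ => 0) +
  ((γ (Sum.inr n') : ℝ) *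
    (if β + Finsupp.single (Sum.inr n') 1 = γ + γ' then 1 else 0))

/-- The subcritical coefficient `(∂_i)^{sc}_β^γ`. -/
def coefPartialSc (s : Fin d → ℝ) (η : ℝ) (reg : Option Lm → ℝ) (ν : ℝ)
    (i : Fin d) (β γ : MCoord Lm d) : ℝ :=
  ∑ᶠ n : Nd d,
    ((n i : ℝ) + 1) *
      coefZDsc s η reg ν (Finsupp.single (Sum.inr (n + unitNd i)) 1) n β γ

/-- `⌊β⌋ := Σ_n |n|·β(n)`. -/
def polydeg (s : Fin d → ℝ) (β : MCoord Lm d) : ℝ :=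
  β.sum fun x v =>
    match x with
    | Sum.inl _ => 0
    | Sum.inr n => snorm s n * (v : ℝ)

/-- `Σ_n (|n| − ν)·β(n)`. -/
def polyexcess (s : Fin d → ℝ) (ν : ℝ) (β : MCoord Lm d) : ℝ :=
  β.sum fun x v =>
    match x with
    | Sum.inl _ => 0
    | Sum.inr n => (snorm s n - ν) * (v : ℝ)

/-- `|β|_≺ := λ₁·ℓ(β) + λ₂·⟦β⟧ + λ₃·⌊β⌋`. -/
def ordPrec (s : Fin d → ℝ) (lam1 lam2 lam3 : ℝ) (β : MCoord Lm d) : ℝ :=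
  lam1 * (mlen β : ℝ) + lam2 * (nh β : ℝ) + lam3 * polydeg s β


/-!
Since `[β] = 1`, the constant `ν - η` equals `(ν - η)·[β]`, so both sides of the inequality are
sums over the coordinates `x` of `β(x)` times a weight, and it suffices to compare weights.
For a noise coordinate `(l, k)` the comparison is subcriticality of `(l, k)` (taken at `k' = k`)
together with `reg l + κ ≤ α l`; for a polynomial coordinate `n` it is `|n| > ν + 2κ`, which holds
because `β(n) ≠ 0` rules out `|n| < ν`.
-/

def coordBrkt : Coord Lm d → ℝ
  | Sum.inl (_, k) => 1 - mlen k
  | Sum.inr _ => 1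

def coordHomg (s : Fin d → ℝ) (η : ℝ) (α : Option Lm → ℝ) : Coord Lm d → ℝ
  | Sum.inl (l, k) => α l + k.sum fun n v => (η - snorm s n) * (v : ℝ)
  | Sum.inr n => snorm s n - η

def coordExcess (s : Fin d → ℝ) (ν : ℝ) : Coord Lm d → ℝ
  | Sum.inl _ => 0
  | Sum.inr n => snorm s n - ν

theorem mlen_eq_sum {I : Type} (m : I →₀ ℕ) : (mlen m : ℝ) = m.sum fun _ v => (v : ℝ) := by
  simp only [mlen, Finsupp.sum, Nat.cast_sum]

theorem brkt_eq_sum (β : MCoord Lm d) :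
    (brkt β : ℝ) = β.sum fun x v => coordBrkt x * (v : ℝ) := by
  simp only [brkt, Finsupp.sum, Int.cast_sum]
  refine Finset.sum_congr rfl fun x _ => ?_
  rcases x with ⟨l, k⟩ | n <;> simp [coordBrkt]

theorem homg_eq_sum (s : Fin d → ℝ) (η : ℝ) (α : Option Lm → ℝ) (β : MCoord Lm d) :
    homg s η α β = β.sum fun x v => coordHomg s η α x * (v : ℝ) := by
  simp only [homg, Finsupp.sum]
  refine Finset.sum_congr rfl fun x _ => ?_
  rcases x with ⟨l, k⟩ | n <;> rfl

theorem polyexcess_eq_sum (s : Fin d → ℝ) (ν : ℝ) (β : MCoord Lm d) :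
    polyexcess s ν β = β.sum fun x v => coordExcess s ν x * (v : ℝ) := by
  simp only [polyexcess, Finsupp.sum]
  refine Finset.sum_congr rfl fun x _ => ?_
  rcases x with ⟨l, k⟩ | n <;> simp [coordExcess]

theorem brkt_zero : brkt (0 : MCoord Lm d) = 0 := by
  simp [brkt]

theorem Finsupp.sum_mul_lt_sum_mul {ι : Type} {m : ι →₀ ℕ} (hm : m ≠ 0) {f g : ι → ℝ}
    (hfg : ∀ x, m x ≠ 0 → f x < g x) :
    (m.sum fun x v => f x * (v : ℝ)) < m.sum fun x v => g x * (v : ℝ) := by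
  refine Finset.sum_lt_sum_of_nonempty (Finsupp.support_nonempty_iff.mpr hm) fun x hx => ?_
  have hx : m x ≠ 0 := Finsupp.mem_support_iff.mp hx
  exact mul_lt_mul_of_pos_right (hfg x hx) (Nat.cast_pos.mpr (Nat.pos_of_ne_zero hx))

theorem sum_sub_snorm_mul_eq (s : Fin d → ℝ) (a b : ℝ) (k : MNd d) :
    (k.sum fun n v => (a - snorm s n) * (v : ℝ)) =
      (k.sum fun n v => (b - snorm s n) * (v : ℝ)) + (a - b) * mlen k := by
  rw [mlen_eq_sum, Finsupp.mul_sum, ← Finsupp.sum_add]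
  exact Finset.sum_congr rfl fun n _ => by ring

theorem Subcritical.lt_reg_add_sum {L : Type} {s : Fin d → ℝ} {η : ℝ} {reg : L → ℝ} {ν : ℝ}
    {l : L} {k : MNd d} (h : Subcritical s η reg ν l k) :
    ν < η + reg l + k.sum fun n v => (ν - snorm s n) * (v : ℝ) := by
  rcases eq_or_ne k 0 with rfl | hk
  · simpa using h.1
  · exact (h.2 k (pos_iff_ne_zero.mpr hk) le_rfl).2

theorem coord_weight_lt_coordHomg {s : Fin d → ℝ} {η : ℝ} {α reg : Option Lm → ℝ} {ν κ : ℝ}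
    (h1 : ∀ l : Option Lm, reg l + κ ≤ α l)
    (h2 : ∀ n : Nd d, snorm s n < ν ∨ ν + 2 * κ < snorm s n)
    {β : MCoord Lm d} (hβ : β ∈ Nmin s η reg ν) {x : Coord Lm d} (hx : β x ≠ 0) :
    (ν - η) * coordBrkt x + κ + 1 / 2 * coordExcess s ν x < coordHomg s η α x := by
  obtain ⟨-, hsc, hpoly⟩ := hβ
  rcases x with ⟨l, k⟩ | n
  · have hlk := (hsc l k hx).lt_reg_add_sum
    rw [sum_sub_snorm_mul_eq s ν η] at hlk
    simp only [coordBrkt, coordExcess, coordHomg]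
    linarith [h1 l]
  · have hn : ν + 2 * κ < snorm s n := (h2 n).resolve_left fun h => hx (hpoly n h)
    simp only [coordBrkt, coordExcess, coordHomg]
    linarith

theorem stmt8_general {Lm : Type} {d : ℕ}
    (s : Fin d → ℝ) (η : ℝ)
    (α reg : Option Lm → ℝ) (ν : ℝ) (κ : ℝ)
    (h1 : ∀ l : Option Lm, reg l + κ ≤ α l)
    (h2 : ∀ n : Nd d, snorm s n < ν ∨ ν + 2 * κ < snorm s n)
    (β : MCoord Lm d) (hβ : β ∈ Nmin s η reg ν) :
    ν - η + κ * (mlen β : ℝ) + (1 / 2) * polyexcess s ν β < homg s η α β := by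
  have hbrkt : (brkt β : ℝ) = 1 := by exact_mod_cast hβ.1
  have hne : β ≠ 0 := by
    rintro rfl
    simp [brkt_zero] at hbrkt
  calc ν - η + κ * (mlen β : ℝ) + (1 / 2) * polyexcess s ν β
      = (ν - η) * brkt β + κ * mlen β + 1 / 2 * polyexcess s ν β := by rw [hbrkt, mul_one]
    _ = β.sum fun x v => ((ν - η) * coordBrkt x + κ + 1 / 2 * coordExcess s ν x) * (v : ℝ) := by
      simp only [brkt_eq_sum, mlen_eq_sum, polyexcess_eq_sum, Finsupp.mul_sum,
        ← Finsupp.sum_add]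
      exact Finset.sum_congr rfl fun x _ => by ring
    _ < β.sum fun x v => coordHomg s η α x * (v : ℝ) :=
      Finsupp.sum_mul_lt_sum_mul hne fun x hx => coord_weight_lt_coordHomg h1 h2 hβ hx
    _ = homg s η α β := (homg_eq_sum s η α β).symm

theorem stmt8 {Lm : Type} [Fintype Lm] {d : ℕ} (hd : 1 ≤ d)
    (s : Fin d → ℝ) (hs : ∀ i, 1 ≤ s i) (η : ℝ)
    (α reg : Option Lm → ℝ) (ν : ℝ) (κ : ℝ) (hκ : 0 < κ)
    (h1 : ∀ l : Option Lm, reg l + κ ≤ α l)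
    (h2 : ∀ n : Nd d, snorm s n < ν ∨ ν + 2 * κ < snorm s n)
    (β : MCoord Lm d) (hβ : β ∈ Nmin s η reg ν) :
    ν - η + κ * (mlen β : ℝ) + (1 / 2) * polyexcess s ν β < homg s η α β :=
  stmt8_general s η α reg ν κ h1 h2 β hβ

end
end

section
/- Assume reg(l) < α(l) for every l ∈ 𝔏 and ν ∉ {|n| : n ∈ ℕ^d}. Then for every a ∈ ℝ the set {β ∈ populated ∪ N_min : |β| < a} is finite. -/
open scoped Classical

noncomputable section

variable {Lm : Type} {d : ℕ}

/-! On `N_min` we have `[β] = 1`, so `|β| + η − ν = Σ_c β(c)·w(c)` with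
`w(c) = |e_c| + (η − ν)[e_c]`. On the coordinates that subcriticality and the condition
`β(n) = 0` for `|n| < ν` allow, `w` is positive (because `reg < α` and `|n| ≠ ν`), and only
finitely many of them have weight below any bound: for a coordinate `(l, k)`, subcriticality
confines the support of `k` to `{|n| < η}` and bounds each of its entries. Hence `|β| < a`
bounds both the support and the entries of `β`. The polynomial part `P` is handled directly. -/

section FiniteFinsupp

variable {ι : Type*}

theorem Set.Finite.setOf_support_subset_le {G : Set ι} (hG : G.Finite) (N : ι → ℕ) :
    {f : ι →₀ ℕ | ↑f.support ⊆ G ∧ ∀ c, f c ≤ N c}.Finite := by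
  let g : ι →₀ ℕ := Finsupp.ofSupportFinite (G.indicator N)
    (hG.subset (Set.support_indicator_subset))
  refine (Set.finite_Iic g).subset fun f ⟨hsupp, hle⟩ c => ?_
  by_cases hc : c ∈ G
  · simpa [g, Finsupp.ofSupportFinite_coe, hc] using hle c
  · have : f c = 0 := Finsupp.notMem_support_iff.1 fun h => hc (hsupp h)
    simp [this]

theorem finite_setOf_sum_mul_lt (P : ι → Prop) (w : ι → ℝ) (C : ℝ)
    (hpos : ∀ c, P c → 0 < w c) (hfin : {c | P c ∧ w c < C}.Finite) :
    {f : ι →₀ ℕ | (∀ c ∈ f.support, P c) ∧ (f.sum fun c v => w c * v) < C}.Finite := by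
  refine (hfin.setOf_support_subset_le fun c => ⌈C / w c⌉₊).subset ?_
  rintro f ⟨hP, hlt⟩
  have hterm : ∀ c ∈ f.support, w c * f c < C := fun c hc =>
    lt_of_le_of_lt (Finset.single_le_sum (f := fun c => w c * (f c : ℝ))
      (fun c hc => (mul_pos (hpos c (hP c hc))
        (Nat.cast_pos.2 (Nat.pos_of_ne_zero (by simpa using hc)))).le) hc) hlt
  refine ⟨fun c hc => ⟨hP c hc, ?_⟩, fun c => ?_⟩
  · have hone : (1 : ℝ) ≤ f c := by exact_mod_cast Nat.one_le_iff_ne_zero.2 (by simpa using hc)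
    nlinarith [hterm c hc, hpos c (hP c hc)]
  · by_cases hc : c ∈ f.support
    · refine Nat.cast_le.1 (le_trans ?_ (Nat.le_ceil _))
      rw [le_div_iff₀ (hpos c (hP c hc)), mul_comm]
      exact (hterm c hc).le
    · simp [Finsupp.notMem_support_iff.1 hc]

end FiniteFinsupp

theorem finite_setOf_snorm_le {s : Fin d → ℝ} (hs : ∀ i, 1 ≤ s i) (C : ℝ) :
    {n : Nd d | snorm s n ≤ C}.Finite := by
  refine (Set.Finite.pi' fun _ => Set.finite_Iic ⌈C⌉₊).subset fun n hn i => ?_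
  have hcoord : (n i : ℝ) ≤ snorm s n :=
    calc (n i : ℝ) ≤ s i * n i := le_mul_of_one_le_left (Nat.cast_nonneg _) (hs i)
      _ ≤ snorm s n := Finset.single_le_sum (f := fun j => s j * (n j : ℝ))
          (fun j _ => mul_nonneg (by linarith [hs j]) (Nat.cast_nonneg _)) (Finset.mem_univ i)
  exact Nat.cast_le.1 ((hcoord.trans hn).trans (Nat.le_ceil C))

def nuDefect (s : Fin d → ℝ) (ν : ℝ) (k : MNd d) : ℝ :=
  k.sum fun n v => (ν - snorm s n) * (v : ℝ)

theorem nuDefect_add (s : Fin d → ℝ) (ν : ℝ) (k k' : MNd d) :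
    nuDefect s ν (k + k') = nuDefect s ν k + nuDefect s ν k' :=
  Finsupp.sum_add_index' (fun _ => by rw [Nat.cast_zero, mul_zero])
    fun _ _ _ => by push_cast; ring

theorem nuDefect_single (s : Fin d → ℝ) (ν : ℝ) (n : Nd d) (m : ℕ) :
    nuDefect s ν (Finsupp.single n m) = (ν - snorm s n) * m :=
  Finsupp.sum_single_index (by simp)

theorem nuDefect_eq_sub (s : Fin d → ℝ) (η ν : ℝ) (k : MNd d) :
    nuDefect s ν k = (k.sum fun n v => (η - snorm s n) * (v : ℝ)) - (η - ν) * mlen k := by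
  rw [nuDefect, mlen, Nat.cast_finsupp_sum, Finsupp.mul_sum, ← Finsupp.sum_sub]
  exact Finsupp.sum_congr fun _ _ => by ring

namespace Subcritical

variable {L : Type} {s : Fin d → ℝ} {η : ℝ} {reg : L → ℝ} {ν : ℝ} {l : L} {k : MNd d}

theorem lt_nuDefect (h : Subcritical s η reg ν l k) {k' : MNd d} (hk' : k' ≤ k) :
    ν < η + reg l + nuDefect s ν k' := by
  rcases eq_or_ne k' 0 with rfl | hne
  · simpa [nuDefect] using h.1
  · exact (h.2 k' (pos_iff_ne_zero.2 hne) hk').2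

theorem snorm_lt (h : Subcritical s η reg ν l k) {n : Nd d} (hn : k n ≠ 0) : snorm s n < η := by
  have : ν < η + nuDefect s ν (Finsupp.single n 1) :=
    (h.2 _ (pos_iff_ne_zero.2 (Finsupp.single_ne_zero.2 one_ne_zero))
      (Finsupp.single_le_iff.2 (Nat.one_le_iff_ne_zero.2 hn))).1
  rw [nuDefect_single, Nat.cast_one, mul_one] at this
  linarith

theorem mul_lt_of_lt_snorm (h : Subcritical s η reg ν l k) (n : Nd d) :
    (snorm s n - ν) * k n < η + reg l - ν := by
  have := h.lt_nuDefect (Finsupp.single_le_iff.2 le_rfl : Finsupp.single n (k n) ≤ k)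
  rw [nuDefect_single] at this
  linarith

theorem mul_lt_of_snorm_lt (h : Subcritical s η reg ν l k) (n : Nd d) :
    (ν - snorm s n) * k n < nuDefect s ν k + η + reg l - ν := by
  have hsplit := nuDefect_add s ν (Finsupp.single n (k n)) (k.erase n)
  rw [Finsupp.single_add_erase, nuDefect_single] at hsplit
  have := h.lt_nuDefect (k' := k.erase n) (by
    conv_rhs => rw [← Finsupp.single_add_erase n k]
    exact le_add_self)
  linarith

end Subcritical

/-- The contribution `|e_c| + (η − ν)[e_c]` of one coordinate `c`. -/
def shiftedHomg (s : Fin d → ℝ) (η ν : ℝ) (α : Option Lm → ℝ) : Coord Lm d → ℝ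
  | .inl (l, k) => α l + (η - ν) + nuDefect s ν k
  | .inr n => snorm s n - ν

theorem homg_add_mul_brkt (s : Fin d → ℝ) (η ν : ℝ) (α : Option Lm → ℝ) (β : MCoord Lm d) :
    homg s η α β + (η - ν) * brkt β = β.sum fun c v => shiftedHomg s η ν α c * v := by
  rw [homg, brkt, Int.cast_finsupp_sum, Finsupp.mul_sum, ← Finsupp.sum_add]
  refine Finsupp.sum_congr fun c _ => ?_
  rcases c with ⟨l, k⟩ | n
  · simp only [shiftedHomg, nuDefect_eq_sub s η ν k]
    push_cast
    ring
  · simp only [shiftedHomg]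
    push_cast
    ring

def AdmissibleCoord (s : Fin d → ℝ) (η : ℝ) (reg : Option Lm → ℝ) (ν : ℝ) :
    Coord Lm d → Prop
  | .inl (l, k) => Subcritical s η reg ν l k
  | .inr n => ν < snorm s n

section Admissible

variable {s : Fin d → ℝ} {η : ℝ} {α reg : Option Lm → ℝ} {ν : ℝ}

theorem admissibleCoord_of_mem_support {β : MCoord Lm d} (hβ : β ∈ Nmin s η reg ν)
    (hν : ∀ n : Nd d, snorm s n ≠ ν) {c : Coord Lm d} (hc : c ∈ β.support) :
    AdmissibleCoord s η reg ν c := by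
  rw [Finsupp.mem_support_iff] at hc
  rcases c with ⟨l, k⟩ | n
  · exact hβ.2.1 l k hc
  · exact lt_of_le_of_ne (not_lt.1 fun h => hc (hβ.2.2 n h)) (hν n).symm

theorem shiftedHomg_pos (hreg : ∀ l, reg l < α l) {c : Coord Lm d}
    (hc : AdmissibleCoord s η reg ν c) : 0 < shiftedHomg s η ν α c := by
  rcases c with ⟨l, k⟩ | n
  · have := Subcritical.lt_nuDefect hc le_rfl
    simp only [shiftedHomg]
    linarith [hreg l]
  · exact sub_pos.2 hc

/-- Each entry `k n` is bounded: below `ν` because the rest of `k` has defect above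
`ν − η − reg l`, above `ν` by subcriticality of `single n (k n)`. -/
theorem finite_setOf_subcritical_shiftedHomg_lt (hs : ∀ i, 1 ≤ s i)
    (hν : ∀ n : Nd d, snorm s n ≠ ν) (l : Option Lm) (C : ℝ) :
    {k : MNd d | Subcritical s η reg ν l k ∧ shiftedHomg s η ν α (.inl (l, k)) < C}.Finite := by
  set B := max (C - α l + reg l) (η + reg l - ν)
  refine ((finite_setOf_snorm_le hs η).setOf_support_subset_le
    fun n => ⌈B / |snorm s n - ν|⌉₊).subset ?_
  rintro k ⟨hk, hC⟩
  refine ⟨fun n hn => (hk.snorm_lt (Finsupp.mem_support_iff.1 hn)).le, fun n => ?_⟩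
  have hgap : 0 < |snorm s n - ν| := abs_pos.2 (sub_ne_zero.2 (hν n))
  have hbound : |snorm s n - ν| * k n ≤ B := by
    simp only [shiftedHomg] at hC
    rcases lt_or_gt_of_ne (hν n) with hlt | hgt
    · rw [abs_of_neg (sub_neg.2 hlt)]
      linarith [hk.mul_lt_of_snorm_lt n, le_max_left (C - α l + reg l) (η + reg l - ν)]
    · rw [abs_of_pos (sub_pos.2 hgt)]
      linarith [hk.mul_lt_of_lt_snorm n, le_max_right (C - α l + reg l) (η + reg l - ν)]
  refine Nat.cast_le.1 (le_trans ?_ (Nat.le_ceil _))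
  rw [le_div_iff₀ hgap, mul_comm]
  exact hbound

theorem finite_setOf_admissibleCoord_shiftedHomg_lt [Finite Lm] (hs : ∀ i, 1 ≤ s i)
    (hν : ∀ n : Nd d, snorm s n ≠ ν) (C : ℝ) :
    {c : Coord Lm d | AdmissibleCoord s η reg ν c ∧ shiftedHomg s η ν α c < C}.Finite := by
  have htree := Set.finite_iUnion fun l : Option Lm =>
    (finite_setOf_subcritical_shiftedHomg_lt (η := η) (α := α) (reg := reg) hs hν l C).image
      fun k => (Sum.inl (l, k) : Coord Lm d)
  have hpoly := (finite_setOf_snorm_le hs (C + ν)).image (Sum.inr : Nd d → Coord Lm d)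
  refine (htree.union hpoly).subset ?_
  rintro (⟨l, k⟩ | n) ⟨hc, hC⟩
  · exact Or.inl (Set.mem_iUnion.2 ⟨l, k, ⟨hc, hC⟩, rfl⟩)
  · refine Or.inr ⟨n, ?_, rfl⟩
    simp only [shiftedHomg] at hC
    exact (show snorm s n ≤ C + ν by linarith)

theorem finite_setOf_mem_nmin_homg_lt [Finite Lm] (hs : ∀ i, 1 ≤ s i)
    (hreg : ∀ l, reg l < α l) (hν : ∀ n : Nd d, snorm s n ≠ ν) (a : ℝ) :
    {β : MCoord Lm d | β ∈ Nmin s η reg ν ∧ homg s η α β < a}.Finite := by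
  refine (finite_setOf_sum_mul_lt (AdmissibleCoord s η reg ν) (shiftedHomg s η ν α)
    (a + (η - ν)) (fun c => shiftedHomg_pos hreg)
    (finite_setOf_admissibleCoord_shiftedHomg_lt hs hν _)).subset ?_
  rintro β ⟨hβ, ha⟩
  refine ⟨fun c => admissibleCoord_of_mem_support hβ hν, ?_⟩
  have := homg_add_mul_brkt s η ν α β
  rw [hβ.1, Int.cast_one, mul_one] at this
  linarith

end Admissible

theorem finite_setOf_mem_polySet_homg_lt {s : Fin d → ℝ} (hs : ∀ i, 1 ≤ s i) (η : ℝ)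
    (α : Option Lm → ℝ) (a : ℝ) :
    {β : MCoord Lm d | β ∈ PolySet ∧ homg s η α β < a}.Finite := by
  refine ((finite_setOf_snorm_le hs (a + η)).image
    fun n => Finsupp.single (Sum.inr n : Coord Lm d) 1).subset ?_
  rintro β ⟨⟨n, rfl⟩, ha⟩
  refine ⟨n, ?_, rfl⟩
  rw [homg, Finsupp.sum_single_index (by simp)] at ha
  exact (show snorm s n ≤ a + η by push_cast at ha; linarith)

theorem stmt9_general {Lm : Type} [Fintype Lm] {d : ℕ}
    (s : Fin d → ℝ) (hs : ∀ i, 1 ≤ s i) (η : ℝ)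
    (α reg : Option Lm → ℝ) (ν : ℝ)
    (h1 : ∀ l : Option Lm, reg l < α l)
    (h2 : ∀ n : Nd d, snorm s n ≠ ν)
    (a : ℝ) :
    {β : MCoord Lm d |
      β ∈ Populated s η reg ν ∪ Nmin s η reg ν ∧ homg s η α β < a}.Finite := by
  refine ((finite_setOf_mem_polySet_homg_lt hs η α a).union
    (finite_setOf_mem_nmin_homg_lt (η := η) hs h1 h2 a)).subset ?_
  rintro β ⟨(hP | hN) | hN, ha⟩
  · exact Or.inl ⟨hP, ha⟩
  · exact Or.inr ⟨hN.1, ha⟩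
  · exact Or.inr ⟨hN, ha⟩

theorem stmt9 {Lm : Type} [Fintype Lm] {d : ℕ} (hd : 1 ≤ d)
    (s : Fin d → ℝ) (hs : ∀ i, 1 ≤ s i) (η : ℝ)
    (α reg : Option Lm → ℝ) (ν : ℝ)
    (h1 : ∀ l : Option Lm, reg l < α l)
    (h2 : ∀ n : Nd d, snorm s n ≠ ν)
    (a : ℝ) :
    {β : MCoord Lm d |
      β ∈ Populated s η reg ν ∪ Nmin s η reg ν ∧ homg s η α β < a}.Finite :=
  stmt9_general s hs η α reg ν h1 h2 a

end
end

section
/- Assume reg(l) < α(l) for every l ∈ 𝔏 and ν ∉ {|n| : n ∈ ℕ^d}. Then every β ∈ N_min satisfies |β| > ν − η, and every β ∈ populated ∪ N_min satisfies |β| ≥ min(ν, 0) − η. -/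
open scoped Classical

noncomputable section

variable {Lm : Type} {d : ℕ}

/-
Since `[β] = 1` for `β ∈ N_min`, one has `|β| - (ν - η) = |β| - (ν - η)[β]`, and the right-hand
side splits coordinatewise as `Σ_x excess(x) · β(x)`. A coordinate `(l,k)` contributes
`α(l) + η - ν + Σ_n (ν - |n|) k(n)`, which is positive because subcriticality gives this with
`reg(l)` in place of `α(l)`; a coordinate `n` contributes `|n| - ν`, positive because `β(n) ≠ 0`
forces `|n| ≥ ν` and `|n| ≠ ν` by assumption. For `β = e_n ∈ P` simply `|β| = |n| - η ≥ -η`.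
-/

lemma snorm_nonneg {s : Fin d → ℝ} (hs : ∀ i, 1 ≤ s i) (n : Nd d) : 0 ≤ snorm s n :=
  Finset.sum_nonneg fun i _ => mul_nonneg (zero_le_one.trans (hs i)) (Nat.cast_nonneg _)

lemma Subcritical.lt_add_sum {L : Type} {s : Fin d → ℝ} {η : ℝ} {α reg : L → ℝ} {ν : ℝ}
    {l : L} {k : MNd d} (hsub : Subcritical s η reg ν l k) (hreg : reg l < α l) :
    ν < η + α l + k.sum fun n v => (ν - snorm s n) * (v : ℝ) := by
  rcases eq_or_ne k 0 with rfl | hk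
  · simpa using hsub.1.trans (by linarith)
  · linarith [(hsub.2 k (pos_iff_ne_zero.mpr hk) le_rfl).2]

lemma sum_sub_snorm_mul (s : Fin d → ℝ) (η ν : ℝ) (k : MNd d) :
    (k.sum fun n v => (ν - snorm s n) * (v : ℝ)) =
      (k.sum fun n v => (η - snorm s n) * (v : ℝ)) + (ν - η) * (mlen k : ℝ) := by
  simp only [mlen, Finsupp.sum, Nat.cast_sum, Finset.mul_sum, ← Finset.sum_add_distrib]
  exact Finset.sum_congr rfl fun n _ => by ring

def excess (s : Fin d → ℝ) (η : ℝ) (α : Option Lm → ℝ) (ν : ℝ) : Coord Lm d → ℝ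
  | Sum.inl (l, k) => α l + η - ν + k.sum fun n v => (ν - snorm s n) * (v : ℝ)
  | Sum.inr n => snorm s n - ν

lemma homg_eq_add_sum_excess (s : Fin d → ℝ) (η : ℝ) (α : Option Lm → ℝ) (ν : ℝ)
    (β : MCoord Lm d) :
    homg s η α β = (ν - η) * brkt β + β.sum fun x v => excess s η α ν x * v := by
  rw [homg, brkt, Int.cast_finsupp_sum, Finsupp.mul_sum, ← Finsupp.sum_add]
  refine Finsupp.sum_congr fun x _ => ?_
  rcases x with ⟨l, k⟩ | n
  · simp only [excess, sum_sub_snorm_mul s η ν k]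
    push_cast
    ring
  · simp only [excess]
    push_cast
    ring

lemma excess_pos_of_mem_Nmin {s : Fin d → ℝ} {η : ℝ} {α reg : Option Lm → ℝ} {ν : ℝ}
    (hreg : ∀ l, reg l < α l) (hν : ∀ n, snorm s n ≠ ν) {β : MCoord Lm d}
    (hβ : β ∈ Nmin s η reg ν) {x : Coord Lm d} (hx : β x ≠ 0) : 0 < excess s η α ν x := by
  obtain ⟨-, hsub, hpoly⟩ := hβ
  rcases x with ⟨l, k⟩ | n
  · simp only [excess]
    linarith [(hsub l k hx).lt_add_sum (hreg l)]
  · have hle : ν ≤ snorm s n := not_lt.mp fun h => hx (hpoly n h)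
    exact sub_pos.mpr (hle.lt_of_ne (hν n).symm)

lemma sub_lt_homg_of_mem_Nmin {s : Fin d → ℝ} {η : ℝ} {α reg : Option Lm → ℝ} {ν : ℝ}
    (hreg : ∀ l, reg l < α l) (hν : ∀ n, snorm s n ≠ ν) {β : MCoord Lm d}
    (hβ : β ∈ Nmin s η reg ν) : ν - η < homg s η α β := by
  have hβ0 : β ≠ 0 := by
    rintro rfl
    simp [Nmin, brkt] at hβ
  have hsum : 0 < β.sum fun x v => excess s η α ν x * v := by
    refine Finset.sum_pos (fun x hx => ?_) (Finsupp.support_nonempty_iff.mpr hβ0)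
    have hx : β x ≠ 0 := Finsupp.mem_support_iff.mp hx
    exact mul_pos (excess_pos_of_mem_Nmin hreg hν hβ hx) (by positivity)
  rw [homg_eq_add_sum_excess s η α ν, hβ.1]
  push_cast
  linarith

lemma homg_single_inr (s : Fin d → ℝ) (η : ℝ) (α : Option Lm → ℝ) (n : Nd d) :
    homg s η α (Finsupp.single (Sum.inr n) 1 : MCoord Lm d) = snorm s n - η := by
  simp [homg, Finsupp.sum_single_index]

theorem stmt10_general {Lm : Type} {d : ℕ}
    (s : Fin d → ℝ) (hs : ∀ i, 1 ≤ s i) (η : ℝ)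
    (α reg : Option Lm → ℝ) (ν : ℝ)
    (h1 : ∀ l : Option Lm, reg l < α l)
    (h2 : ∀ n : Nd d, snorm s n ≠ ν) :
    (∀ β ∈ Nmin (Lm := Lm) (d := d) s η reg ν, ν - η < homg s η α β) ∧
    (∀ β ∈ Populated (Lm := Lm) (d := d) s η reg ν ∪ Nmin s η reg ν,
      min ν 0 - η ≤ homg s η α β) := by
  have hNmin : ∀ β ∈ Nmin s η reg ν, ν - η < homg s η α β :=
    fun β hβ => sub_lt_homg_of_mem_Nmin h1 h2 hβ
  refine ⟨hNmin, ?_⟩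
  rintro β ((⟨n, rfl⟩ | ⟨hβ, -⟩) | hβ)
  · rw [homg_single_inr]
    linarith [snorm_nonneg hs n, min_le_right ν 0]
  all_goals linarith [hNmin β hβ, min_le_left ν 0]

theorem stmt10 {Lm : Type} [Fintype Lm] {d : ℕ} (hd : 1 ≤ d)
    (s : Fin d → ℝ) (hs : ∀ i, 1 ≤ s i) (η : ℝ)
    (α reg : Option Lm → ℝ) (ν : ℝ)
    (h1 : ∀ l : Option Lm, reg l < α l)
    (h2 : ∀ n : Nd d, snorm s n ≠ ν) :
    (∀ β ∈ Nmin (Lm := Lm) (d := d) s η reg ν, ν - η < homg s η α β) ∧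
    (∀ β ∈ Populated (Lm := Lm) (d := d) s η reg ν ∪ Nmin s η reg ν,
      min ν 0 - η ≤ homg s η α β) :=
  stmt10_general s hs η α reg ν h1 h2
end
end

section
/- Let γ' ∈ N, n' ∈ ℕ^d, γ ∈ P ∪ N_min and β ∈ M(coord). If (z^{γ'}D^{(n')})^{sc}_β^γ ≠ 0, then β ∈ N. -/
open scoped Classical

noncomputable section

variable {Lm : Type} {d : ℕ}

/-! A nonzero subcritical coefficient means that `β` arises from `γ + γ'` either by replacing
one variable `z_(l,k)` of `γ` by `z_(l,k+e_{n'})` with `(l, k + e_{n'})` subcritical, or by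
removing one polynomial variable `z_{n'}` of `γ`. Either operation lowers `[·]` by exactly one,
and neither creates a non-subcritical variable or a polynomial variable of low degree. Since
`[γ] = [γ'] = 1` and `γ'` already carries the noise, `β` lies in `N`. When `γ ∈ P` only the
second operation is possible and it returns `β = γ'`. -/

section Bracket

lemma brkt_add (a b : MCoord Lm d) : brkt (a + b) = brkt a + brkt b := by
  unfold brkt
  rw [Finsupp.sum_add_index']
  · rintro (⟨l, k⟩ | n) <;> simp
  · rintro (⟨l, k⟩ | n) m m' <;> push_cast <;> ring

lemma brkt_tsub {a b : MCoord Lm d} (h : b ≤ a) : brkt (a - b) = brkt a - brkt b := by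
  rw [eq_sub_iff_add_eq, ← brkt_add, tsub_add_cancel_of_le h]

lemma brkt_single_inl (l : Option Lm) (k : MNd d) :
    brkt (Finsupp.single (Sum.inl (l, k)) 1 : MCoord Lm d) = 1 - (mlen k : ℤ) := by
  simp [brkt, Finsupp.sum_single_index]

lemma brkt_single_inr (n : Nd d) :
    brkt (Finsupp.single (Sum.inr n) 1 : MCoord Lm d) = 1 := by
  simp [brkt, Finsupp.sum_single_index]

lemma mlen_add_single {I : Type} (m : I →₀ ℕ) (i : I) :
    mlen (m + Finsupp.single i 1) = mlen m + 1 := by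
  unfold mlen
  rw [Finsupp.sum_add_index' (fun _ => rfl) (fun _ _ _ => rfl), Finsupp.sum_single_index rfl]

lemma nh_add (a b : MCoord Lm d) : nh (a + b) = nh a + nh b := by
  unfold nh
  rw [Finsupp.sum_add_index']
  · rintro (⟨_ | l, k⟩ | n) <;> simp
  · rintro (⟨_ | l, k⟩ | n) m m' <;> simp

end Bracket

section Subcriticality

variable {s : Fin d → ℝ} {η ν : ℝ} {reg : Option Lm → ℝ} {a b : MCoord Lm d}

lemma SubcriticalM.mono (hb : SubcriticalM s η reg ν b) (hab : a ≤ b) :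
    SubcriticalM s η reg ν a :=
  fun l k ha => hb l k (Nat.pos_iff_ne_zero.mp ((Nat.pos_of_ne_zero ha).trans_le (hab _)))

lemma SubcriticalM.add (ha : SubcriticalM s η reg ν a) (hb : SubcriticalM s η reg ν b) :
    SubcriticalM s η reg ν (a + b) := by
  intro l k hab
  by_cases h : a (Sum.inl (l, k)) = 0
  · exact hb l k (by simpa [h] using hab)
  · exact ha l k h

lemma subcriticalM_single {l : Option Lm} {k : MNd d} (h : Subcritical s η reg ν l k)
    (m : ℕ) : SubcriticalM s η reg ν (Finsupp.single (Sum.inl (l, k)) m) := by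
  intro l' k' hm
  obtain ⟨rfl, rfl⟩ : l = l' ∧ k = k' := by
    by_contra hne
    exact hm (Finsupp.single_eq_of_ne' (by simpa [Prod.ext_iff] using hne))
  exact h

end Subcriticality

section Populated

variable {s : Fin d → ℝ} {η ν : ℝ} {reg : Option Lm → ℝ}

lemma add_mem_NSet {a b : MCoord Lm d} (ha : brkt a = 0) (hsc : SubcriticalM s η reg ν a)
    (hpoly : ∀ n : Nd d, snorm s n < ν → a (Sum.inr n) = 0) (hb : b ∈ NSet s η reg ν) :
    a + b ∈ NSet s η reg ν := by
  obtain ⟨⟨hb_brkt, hb_sc, hb_poly⟩, hb_nh⟩ := hb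
  refine ⟨⟨?_, hsc.add hb_sc, fun n hn => ?_⟩, ?_⟩
  · rw [brkt_add, ha, hb_brkt, zero_add]
  · rw [Finsupp.add_apply, hpoly n hn, hb_poly n hn]
  · rw [nh_add]
    omega

lemma tsub_add_add_mem_NSet {γ e c γ' : MCoord Lm d} (hγ : γ ∈ Nmin s η reg ν) (he : e ≤ γ)
    (hc_sc : SubcriticalM s η reg ν c)
    (hc_poly : ∀ n : Nd d, snorm s n < ν → c (Sum.inr n) = 0)
    (hc_brkt : brkt c + 1 = brkt e) (hγ' : γ' ∈ NSet s η reg ν) :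
    γ - e + c + γ' ∈ NSet s η reg ν := by
  obtain ⟨hγ_brkt, hγ_sc, hγ_poly⟩ := hγ
  refine add_mem_NSet ?_ ((hγ_sc.mono tsub_le_self).add hc_sc) (fun n hn => ?_) hγ'
  · rw [brkt_add, brkt_tsub he, hγ_brkt]
    omega
  · have hle := (tsub_le_self : γ - e ≤ γ) (Sum.inr n)
    rw [hγ_poly n hn] at hle
    rw [Finsupp.add_apply, hc_poly n hn, Nat.le_zero.mp hle]

end Populated

lemma coefZDsc_ne_zero {s : Fin d → ℝ} {η ν : ℝ} {reg : Option Lm → ℝ}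
    {γ' : MCoord Lm d} {n' : Nd d} {β γ : MCoord Lm d}
    (h : coefZDsc s η reg ν γ' n' β γ ≠ 0) :
    (∃ l k, γ (Sum.inl (l, k)) ≠ 0 ∧ Subcritical s η reg ν l (k + Finsupp.single n' 1) ∧
        β + Finsupp.single (Sum.inl (l, k)) 1 =
          γ + Finsupp.single (Sum.inl (l, k + Finsupp.single n' 1)) 1 + γ') ∨
      (γ (Sum.inr n') ≠ 0 ∧ β + Finsupp.single (Sum.inr n') 1 = γ + γ') := by
  by_contra! hc
  obtain ⟨h_inl, h_inr⟩ := hc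
  refine h ?_
  rw [coefZDsc, Finsupp.sum, Finset.sum_eq_zero, zero_add]
  · by_cases hn : γ (Sum.inr n') = 0
    · simp [hn]
    · simp [h_inr hn]
  · rintro (⟨l, k⟩ | n) hx
    · simp only
      split_ifs with hsc heq
      · exact absurd heq (h_inl l k (Finsupp.mem_support_iff.mp hx) hsc)
      · rw [mul_zero]
      · rfl
    · rfl

lemma eq_tsub_add_of_add_eq {β e γ c : MCoord Lm d} (h : β + e = γ + c) (he : e ≤ γ) :
    β = γ - e + c := by
  rw [tsub_add_eq_add_tsub he]
  exact eq_tsub_of_add_eq h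

theorem stmt11_general {Lm : Type} {d : ℕ}
    (s : Fin d → ℝ) (η : ℝ) (reg : Option Lm → ℝ) (ν : ℝ)
    (γ' : MCoord Lm d) (hγ' : γ' ∈ NSet s η reg ν) (n' : Nd d)
    (γ : MCoord Lm d) (hγ : γ ∈ PolySet ∪ Nmin s η reg ν)
    (β : MCoord Lm d) (h : coefZDsc s η reg ν γ' n' β γ ≠ 0) :
    β ∈ NSet s η reg ν := by
  rcases coefZDsc_ne_zero h with ⟨l, k, hγlk, hsc, hβ⟩ | ⟨hγn', hβ⟩
  · rcases hγ with ⟨n, rfl⟩ | hγ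
    · simp at hγlk
    have he := Finsupp.single_le_iff.mpr (Nat.one_le_iff_ne_zero.mpr hγlk)
    rw [add_assoc] at hβ
    rw [eq_tsub_add_of_add_eq hβ he, ← add_assoc]
    refine tsub_add_add_mem_NSet hγ he (subcriticalM_single hsc 1) (by simp) ?_ hγ'
    rw [brkt_single_inl, brkt_single_inl, mlen_add_single]
    push_cast
    ring
  · have he := Finsupp.single_le_iff.mpr (Nat.one_le_iff_ne_zero.mpr hγn')
    rw [eq_tsub_add_of_add_eq hβ he]
    rcases hγ with ⟨n, rfl⟩ | hγ
    · obtain rfl : n = n' := by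
        by_contra hne
        simp [hne] at hγn'
      rwa [tsub_self, zero_add]
    · simpa using tsub_add_add_mem_NSet hγ he (c := 0) (fun _ _ h => absurd rfl h)
        (by simp) (by rw [brkt_single_inr, brkt, Finsupp.sum_zero_index, zero_add]) hγ'

theorem stmt11 {Lm : Type} [Fintype Lm] {d : ℕ} (hd : 1 ≤ d)
    (s : Fin d → ℝ) (hs : ∀ i, 1 ≤ s i) (η : ℝ) (reg : Option Lm → ℝ) (ν : ℝ)
    (γ' : MCoord Lm d) (hγ' : γ' ∈ NSet s η reg ν) (n' : Nd d)
    (γ : MCoord Lm d) (hγ : γ ∈ PolySet ∪ Nmin s η reg ν)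
    (β : MCoord Lm d) (h : coefZDsc s η reg ν γ' n' β γ ≠ 0) :
    β ∈ NSet s η reg ν :=
  stmt11_general s η reg ν γ' hγ' n' γ hγ β h

end
end

section
/- For every β ∈ M(coord), the set {(γ, γ', n') ∈ M(coord) × N × ℕ^d : |n'| < η and (z^{γ'}D^{(n')})_β^γ ≠ 0} is finite. -/
open scoped Classical

noncomputable section

variable {Lm : Type} {d : ℕ}

/-! A nonzero coefficient comes from one of its two indicator terms, so `γ + γ' ≤ β + e_x`
where `x` is `n'` or a coordinate `(l, k)` with `(l, k + e_{n'})` in the support of `β`.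
For fixed `n'` there are finitely many such `x`, each bounding finitely many pairs `(γ, γ')`,
and since every `s_i` is positive only finitely many `n'` satisfy `|n'| < η`. -/

theorem finite_setOf_snorm_lt {s : Fin d → ℝ} (hs : ∀ i, 0 < s i) (η : ℝ) :
    {n : Nd d | snorm s n < η}.Finite := by
  refine (Set.Finite.pi' fun i => Set.finite_Iic ⌈η / s i⌉₊).subset fun n hn i => ?_
  have hterm : s i * n i ≤ snorm s n :=
    Finset.single_le_sum (fun j _ => mul_nonneg (hs j).le (Nat.cast_nonneg _))
      (Finset.mem_univ i)
  have hlt : (n i : ℝ) < η / s i := by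
    rw [lt_div_iff₀ (hs i), mul_comm]
    exact hterm.trans_lt hn
  exact Nat.cast_le.mp (hlt.le.trans (Nat.le_ceil _))

theorem Finsupp.mem_support_of_add_single_eq {ι : Type*} {β γ : ι →₀ ℕ} {x y : ι}
    (hxy : x ≠ y) (h : β + Finsupp.single x 1 = γ + Finsupp.single y 1) :
    y ∈ β.support := by
  have hy := DFunLike.congr_fun h y
  simp only [Finsupp.add_apply, Finsupp.single_apply, if_neg hxy, if_true] at hy
  exact Finsupp.mem_support_iff.mpr (by omega)

def Coord.lower (n : Nd d) : Coord Lm d → Coord Lm d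
  | Sum.inl (l, k) => Sum.inl (l, k - Finsupp.single n 1)
  | Sum.inr m => Sum.inr m

theorem exists_add_le_of_coefZD_ne_zero {γ' γ β : MCoord Lm d} {n' : Nd d}
    (h : coefZD γ' n' β γ ≠ 0) :
    ∃ x ∈ insert (Sum.inr n') (β.support.image (Coord.lower n')),
      γ + γ' ≤ β + Finsupp.single x 1 := by
  unfold coefZD at h
  by_cases hpoly : β + Finsupp.single (Sum.inr n') 1 = γ + γ'
  · exact ⟨_, Finset.mem_insert_self _ _, hpoly.ge⟩
  rw [if_neg hpoly, mul_zero, add_zero, Finsupp.sum] at h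
  obtain ⟨⟨l, k⟩ | m, -, hne⟩ := Finset.exists_ne_zero_of_sum_ne_zero h
  · have hE : β + Finsupp.single (Sum.inl (l, k)) 1 =
        γ + Finsupp.single (Sum.inl (l, k + Finsupp.single n' 1)) 1 + γ' := by
      by_contra hE
      simp [hE] at hne
    have hk : (Sum.inl (l, k) : Coord Lm d) ≠ Sum.inl (l, k + Finsupp.single n' 1) := by
      simp
    have hsupp := Finsupp.mem_support_of_add_single_eq hk (by rw [hE, add_right_comm])
    refine ⟨Sum.inl (l, k), Finset.mem_insert_of_mem (Finset.mem_image.mpr ⟨_, hsupp, ?_⟩), ?_⟩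
    · simp [Coord.lower]
    · rw [hE, add_right_comm]
      exact le_self_add
  · simp at hne

theorem stmt14_general {Lm : Type} {d : ℕ}
    (s : Fin d → ℝ) (hs : ∀ i, 1 ≤ s i) (η : ℝ) (reg : Option Lm → ℝ) (ν : ℝ)
    (β : MCoord Lm d) :
    {p : MCoord Lm d × MCoord Lm d × Nd d |
      p.2.1 ∈ NSet s η reg ν ∧ snorm s p.2.2 < η ∧
      coefZD p.2.1 p.2.2 β p.1 ≠ 0}.Finite := by
  let X : Nd d → Finset (Coord Lm d) := fun n' =>
    insert (Sum.inr n') (β.support.image (Coord.lower n'))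
  let box : Coord Lm d → Set (MCoord Lm d) := fun x => Set.Iic (β + Finsupp.single x 1)
  have hfin : (⋃ n' ∈ {n : Nd d | snorm s n < η}, ⋃ x ∈ (X n' : Set (Coord Lm d)),
      box x ×ˢ box x ×ˢ {n'}).Finite :=
    (finite_setOf_snorm_lt (fun i => one_pos.trans_le (hs i)) η).biUnion fun n' _ =>
      (X n').finite_toSet.biUnion fun x _ =>
        (Set.finite_Iic _).prod ((Set.finite_Iic _).prod (Set.finite_singleton n'))
  refine hfin.subset ?_
  rintro ⟨γ, γ', n'⟩ ⟨-, hn', hcoef⟩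
  obtain ⟨x, hx, hle⟩ := exists_add_le_of_coefZD_ne_zero hcoef
  simp only [Set.mem_iUnion]
  exact ⟨n', hn', x, hx, (le_self_add (a := γ) (b := γ')).trans hle,
    (le_add_self (a := γ') (b := γ)).trans hle, rfl⟩

theorem stmt14 {Lm : Type} [Fintype Lm] {d : ℕ} (hd : 1 ≤ d)
    (s : Fin d → ℝ) (hs : ∀ i, 1 ≤ s i) (η : ℝ) (reg : Option Lm → ℝ) (ν : ℝ)
    (β : MCoord Lm d) :
    {p : MCoord Lm d × MCoord Lm d × Nd d |
      p.2.1 ∈ NSet s η reg ν ∧ snorm s p.2.2 < η ∧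
      coefZD p.2.1 p.2.2 β p.1 ≠ 0}.Finite :=
  stmt14_general s hs η reg ν β
end
end
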